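/- arXiv:math/0610801 — 2 statements merged into one kernel-verified Lean document; each statement's English description precedes it below -/
import Mathlib

section
/- Let N ≥ 3 and let W(x) = (1 + |x|²/(N(N-2)))^{-(N-2)/2} on ℝ^N. Then W satisfies the elliptic equation ΔW + W^{(N+2)/(N-2)} = 0 on ℝ^N. -/
open Real

/-- Partial derivative in direction `i`. -/
noncomputable def pd {N : ℕ} (f : EuclideanSpace ℝ (Fin N) → ℝ) (i : Fin N)
    (x : EuclideanSpace ℝ (Fin N)) : ℝ :=
  fderiv ℝ f x (EuclideanSpace.single i 1)

/-- The Laplacian as the sum of second partial derivatives. -/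
noncomputable def lap {N : ℕ} (f : EuclideanSpace ℝ (Fin N) → ℝ)
    (x : EuclideanSpace ℝ (Fin N)) : ℝ :=
  ∑ i, pd (pd f i) i x

/-- The Aubin–Talenti ground state `W(x) = (1 + |x|²/(N(N-2)))^{-(N-2)/2}`. -/
noncomputable def groundStateW (N : ℕ) (x : EuclideanSpace ℝ (Fin N)) : ℝ :=
  (1 + ‖x‖ ^ 2 / ((N : ℝ) * ((N : ℝ) - 2))) ^ (-(((N : ℝ) - 2) / 2))

/-!
`W(x) = g(‖x‖²)` with `g(s) = (1 + s/c)^(-p)`, `c = N(N-2)`, `p = (N-2)/2`, and for any such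
radial profile `Δ(g ∘ ‖·‖²) = 2N g'(r) + 4r g''(r)` at `r = ‖x‖²`. With `a = 1 + r/c` this gives
`ΔW = (2p/c) (2(p+1)(a-1) - N a) a^(-p-2)`. Since `c = 2Np` and `2(p+1) = N`, the coefficient is
`-1`, i.e. `ΔW = -a^(-p-2)`, while `W^((N+2)/(N-2)) = a^(-p(N+2)/(N-2)) = a^(-p-2)`.
-/

lemma inner_single_one_right {ι : Type*} [Fintype ι] [DecidableEq ι]
    (x : EuclideanSpace ℝ ι) (i : ι) :
    inner ℝ x (EuclideanSpace.single i (1 : ℝ)) = x i := by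
  simp [EuclideanSpace.inner_single_right]

lemma hasFDerivAt_comp_norm_sq {F : Type*} [NormedAddCommGroup F] [InnerProductSpace ℝ F]
    {g : ℝ → ℝ} {d : ℝ} {x : F} (hg : HasDerivAt g d (‖x‖ ^ 2)) :
    HasFDerivAt (fun y : F => g (‖y‖ ^ 2)) (d • 2 • innerSL ℝ x) x :=
  hg.comp_hasFDerivAt x (hasStrictFDerivAt_norm_sq x).hasFDerivAt

section Radial

variable {N : ℕ}

lemma pd_eq_of_hasFDerivAt {f : EuclideanSpace ℝ (Fin N) → ℝ}
    {f' : EuclideanSpace ℝ (Fin N) →L[ℝ] ℝ} {x : EuclideanSpace ℝ (Fin N)}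
    (hf : HasFDerivAt f f' x) (i : Fin N) :
    pd f i x = f' (EuclideanSpace.single i 1) := by
  rw [pd, hf.fderiv]

variable {g g' : ℝ → ℝ}

lemma pd_comp_norm_sq (hg : ∀ s, 0 ≤ s → HasDerivAt g (g' s) s) (i : Fin N) :
    pd (fun y : EuclideanSpace ℝ (Fin N) => g (‖y‖ ^ 2)) i
      = fun y => 2 * g' (‖y‖ ^ 2) * y i := by
  funext y
  rw [pd_eq_of_hasFDerivAt (hasFDerivAt_comp_norm_sq (hg _ (by positivity))) i]
  simp only [smul_apply, innerSL_apply_apply, inner_single_one_right, smul_eq_mul]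
  ring

lemma lap_comp_norm_sq (hg : ∀ s, 0 ≤ s → HasDerivAt g (g' s) s) {g'' : ℝ}
    {x : EuclideanSpace ℝ (Fin N)} (hg' : HasDerivAt g' g'' (‖x‖ ^ 2)) :
    lap (fun y : EuclideanSpace ℝ (Fin N) => g (‖y‖ ^ 2)) x
      = 2 * N * g' (‖x‖ ^ 2) + 4 * ‖x‖ ^ 2 * g'' := by
  have hpd2 (i : Fin N) :
      pd (pd (fun y : EuclideanSpace ℝ (Fin N) => g (‖y‖ ^ 2)) i) i x
        = 2 * g' (‖x‖ ^ 2) + 4 * g'' * x i ^ 2 := by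
    have hcoord := (EuclideanSpace.proj i : EuclideanSpace ℝ (Fin N) →L[ℝ] ℝ).hasFDerivAt
      (x := x)
    have hprod : HasFDerivAt (fun y : EuclideanSpace ℝ (Fin N) => 2 * g' (‖y‖ ^ 2) * y i)
        ((2 : ℝ) • (g' (‖x‖ ^ 2) • EuclideanSpace.proj i + x i • g'' • 2 • innerSL ℝ x)) x := by
      simpa [mul_assoc] using ((hasFDerivAt_comp_norm_sq hg').mul hcoord).const_mul 2
    rw [pd_comp_norm_sq hg i, pd_eq_of_hasFDerivAt hprod i]
    simp only [smul_add, add_apply, smul_apply, PiLp.proj_apply, PiLp.single_eq_same,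
      coe_innerSL_apply, inner_single_one_right, smul_eq_mul, nsmul_eq_mul]
    ring
  simp only [lap, hpd2, Finset.sum_add_distrib, ← Finset.mul_sum]
  simp only [EuclideanSpace.norm_sq_eq, norm_eq_abs, sq_abs, Finset.sum_const, Finset.card_univ,
    Fintype.card_fin, nsmul_eq_mul]
  ring

end Radial

lemma hasDerivAt_one_add_div_rpow (c q : ℝ) {s : ℝ} (hs : 0 < 1 + s / c) :
    HasDerivAt (fun s => (1 + s / c) ^ q) (q / c * (1 + s / c) ^ (q - 1)) s := by
  convert (((hasDerivAt_id' s).div_const c).const_add 1).rpow_const (p := q) (Or.inl hs.ne')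
    using 1
  ring

lemma lap_one_add_norm_sq_div_rpow {N : ℕ} {c : ℝ} (hc : 0 < c) (p : ℝ)
    (x : EuclideanSpace ℝ (Fin N)) :
    lap (fun y : EuclideanSpace ℝ (Fin N) => (1 + ‖y‖ ^ 2 / c) ^ (-p)) x
      = 2 * p / c * (2 * (p + 1) * (‖x‖ ^ 2 / c) - N * (1 + ‖x‖ ^ 2 / c))
        * (1 + ‖x‖ ^ 2 / c) ^ (-p - 2) := by
  have hpos (s : ℝ) (hs : 0 ≤ s) : 0 < 1 + s / c := by positivity
  set a := 1 + ‖x‖ ^ 2 / c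
  have ha : 0 < a := hpos _ (by positivity)
  rw [lap_comp_norm_sq (fun s hs => hasDerivAt_one_add_div_rpow c (-p) (hpos s hs))
    ((hasDerivAt_one_add_div_rpow c (-p - 1) ha).const_mul (-p / c))]
  have ha_succ : a ^ (-p - 1) = a ^ (-p - 2) * a := by
    rw [← rpow_add_one ha.ne']
    ring_nf
  rw [ha_succ, show -p - 1 - 1 = -p - 2 by ring]
  ring

/-- `W` solves the critical elliptic equation `ΔW + W^{(N+2)/(N-2)} = 0` on `ℝ^N`. -/
theorem groundState_solves_elliptic (N : ℕ) (hN : 3 ≤ N)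
    (x : EuclideanSpace ℝ (Fin N)) :
    lap (groundStateW N) x
      + (groundStateW N x) ^ (((N : ℝ) + 2) / ((N : ℝ) - 2)) = 0 := by
  have hN3 : (3 : ℝ) ≤ N := by exact_mod_cast hN
  have hN2 : (N : ℝ) - 2 ≠ 0 := by linarith
  have hc : 0 < (N : ℝ) * (N - 2) := mul_pos (by linarith) (by linarith)
  set a := 1 + ‖x‖ ^ 2 / (N * (N - 2))
  have ha : 0 < a := by positivity
  have hpow : groundStateW N x ^ (((N : ℝ) + 2) / (N - 2)) = a ^ (-(((N : ℝ) - 2) / 2) - 2) := by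
    rw [groundStateW, ← rpow_mul ha.le]
    congr 1
    field_simp
    ring
  have hcoeff : 2 * ((N - 2) / 2) / (N * (N - 2))
      * (2 * ((N - 2) / 2 + 1) * (‖x‖ ^ 2 / (N * (N - 2))) - N * a) = (-1 : ℝ) := by
    simp only [a]
    field_simp
    ring
  rw [show lap (groundStateW N) x = _ from lap_one_add_norm_sq_div_rpow hc ((N - 2) / 2) x,
    hpow, hcoeff]
  ring
end

section
/- Let y : [t₀, T) → ℝ be twice differentiable with y(t) > 0, y'(t) > 0 on (t₀, T), and suppose y''(t) y(t) ≥ p (y'(t))² on (t₀, T) for some p > 1. Then T < ∞. -/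
open Real Set

/-- Levine-type convexity blow-up: a twice differentiable `y` with `y > 0`,
`y' > 0` and `y'' y ≥ p (y')²` (`p > 1`) cannot exist globally on `(t₀, ∞)`;
hence the maximal time is finite. -/
theorem convexity_blowup (p t₀ : ℝ) (hp : 1 < p) (y : ℝ → ℝ)
    (hdiff : ∀ t ∈ Ioi t₀, DifferentiableAt ℝ y t)
    (hdiff2 : ∀ t ∈ Ioi t₀, DifferentiableAt ℝ (deriv y) t)
    (hypos : ∀ t ∈ Ioi t₀, 0 < y t)
    (hy'pos : ∀ t ∈ Ioi t₀, 0 < deriv y t)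
    (hconv : ∀ t ∈ Ioi t₀, p * (deriv y t) ^ 2 ≤ deriv (deriv y) t * y t) :
    False := by
  set g : ℝ → ℝ := fun t => deriv y t * (y t) ^ (-p) with hgdef
  have hgd : ∀ t ∈ Ioi t₀, HasDerivAt g
      (deriv (deriv y) t * (y t) ^ (-p)
        + deriv y t * (deriv y t * (-p) * (y t) ^ (-p - 1))) t := by
    intro t ht
    have h1 : HasDerivAt (deriv y) (deriv (deriv y) t) t := (hdiff2 t ht).hasDerivAt
    have h2 : HasDerivAt (fun s => (y s) ^ (-p))
        (deriv y t * (-p) * (y t) ^ (-p - 1)) t :=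
      (hdiff t ht).hasDerivAt.rpow_const (Or.inl (ne_of_gt (hypos t ht)))
    exact h1.mul h2
  have hgd_nonneg : ∀ t ∈ Ioi t₀, 0 ≤ deriv (deriv y) t * (y t) ^ (-p)
        + deriv y t * (deriv y t * (-p) * (y t) ^ (-p - 1)) := by
    intro t ht
    have hy := hypos t ht
    have hkey : (y t) ^ (-p) = (y t) ^ (-p - 1) * y t := by
      rw [← Real.rpow_add_one (ne_of_gt hy)]; ring_nf
    have hpow : 0 < (y t) ^ (-p - 1) := Real.rpow_pos_of_pos hy _
    have hc := hconv t ht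
    rw [hkey]; nlinarith [hpow, hc]
  have hmono : MonotoneOn g (Ioi t₀) := by
    apply monotoneOn_of_deriv_nonneg (convex_Ioi t₀)
    · exact fun t ht => (hgd t ht).continuousAt.continuousWithinAt
    · rw [interior_Ioi]
      exact fun t ht => (hgd t ht).differentiableAt.differentiableWithinAt
    · rw [interior_Ioi]
      intro t ht
      rw [(hgd t ht).deriv]
      exact hgd_nonneg t ht
  set t₁ : ℝ := t₀ + 1 with ht₁def
  have ht₁ : t₁ ∈ Ioi t₀ := by simp [ht₁def]
  set c : ℝ := g t₁ with hcdef
  have hcpos : 0 < c := mul_pos (hy'pos t₁ ht₁) (Real.rpow_pos_of_pos (hypos t₁ ht₁) _)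
  set ε : ℝ := (p - 1) * c with hεdef
  have hεpos : 0 < ε := mul_pos (by linarith) hcpos
  -- w t = y t ^ (1 - p) + ε t is antitone on Ici t₁
  set w : ℝ → ℝ := fun t => (y t) ^ (1 - p) + ε * t with hwdef
  have hwd : ∀ t ∈ Ioi t₀, HasDerivAt w
      (deriv y t * (1 - p) * (y t) ^ (-p) + ε) t := by
    intro t ht
    have h2 : HasDerivAt (fun s => (y s) ^ (1 - p))
        (deriv y t * (1 - p) * (y t) ^ (1 - p - 1)) t :=
      (hdiff t ht).hasDerivAt.rpow_const (Or.inl (ne_of_gt (hypos t ht)))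
    have h3 : HasDerivAt (fun s => ε * s) ε t := by
      simpa using (hasDerivAt_id t).const_mul ε
    have := h2.add h3
    rw [show (1:ℝ) - p - 1 = -p by ring] at this
    exact this
  have hsub : Ici t₁ ⊆ Ioi t₀ := fun s hs => mem_Ioi.mpr (lt_of_lt_of_le ht₁ hs)
  have hanti : AntitoneOn w (Ici t₁) := by
    apply antitoneOn_of_deriv_nonpos (convex_Ici t₁)
    · exact fun t ht => (hwd t (hsub ht)).continuousAt.continuousWithinAt
    · rw [interior_Ici]
      exact fun t ht =>
        (hwd t (hsub (mem_Ici.mpr (le_of_lt ht)))).differentiableAt.differentiableWithinAt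
    · rw [interior_Ici]
      intro t ht
      have ht' : t ∈ Ioi t₀ := hsub (mem_Ici.mpr (le_of_lt ht))
      rw [(hwd t ht').deriv]
      have hgt : c ≤ g t := hmono ht₁ ht' (le_of_lt ht)
      have : deriv y t * (1 - p) * (y t) ^ (-p) = (1 - p) * g t := by
        rw [hgdef]; ring
      rw [this, hεdef]
      nlinarith [hgt]
  -- choose a large time where w forces y^(1-p) negative
  set z₁ : ℝ := (y t₁) ^ (1 - p) with hz₁def
  have hz₁pos : 0 < z₁ := Real.rpow_pos_of_pos (hypos t₁ ht₁) _
  set T : ℝ := t₁ + z₁ / ε + 1 with hTdef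
  have hT₁ : t₁ ≤ T := by
    have : 0 ≤ z₁ / ε := le_of_lt (div_pos hz₁pos hεpos)
    simp only [hTdef]; linarith
  have hwT : w T ≤ w t₁ := hanti (self_mem_Ici) hT₁ hT₁
  have hzTpos : 0 < (y T) ^ (1 - p) :=
    Real.rpow_pos_of_pos (hypos T (hsub hT₁)) _
  have hεT : ε * (T - t₁) = z₁ + ε := by
    rw [hTdef]; field_simp; ring
  have : (y T) ^ (1 - p) + ε * T ≤ z₁ + ε * t₁ := hwT
  nlinarith [this, hεT, hzTpos]
end
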